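/- arXiv:math/0607432 — 4 statements merged into one kernel-verified Lean document; each statement's English description precedes it below -/
import Mathlib

section
/- Let R be a commutative ring, let b, c ∈ R, and let S be a subset of R. Let I be the ideal of the polynomial ring R[X] generated by the quadratic X² + bX + c together with all elements s·X for s ∈ S. Then the kernel of the composite ring homomorphism R → R[X] → R[X]/I (the constant-polynomial inclusion followed by the quotient map) is exactly the ideal of R generated by the set {s·c : s ∈ S}. -/
open Polynomial

/-!
Write `f = X² + bX + c` and `K = (S)`. An element `r` of the kernel satisfies `C r = q f + t` with
`t ∈ (S)·X`. Reducing modulo `K` kills `t`, so `C r̄ = q̄ f̄` in `(R ⧸ K)[X]`; as `f̄` is monic of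
degree two, `q̄ = 0`, i.e. every coefficient of `q` lies in `K`. Comparing constant terms gives
`r = q(0) c ∈ K c = (S c)`. Conversely `s c = s f - (s X)(X + b)`.
-/

namespace Polynomial

variable {R : Type*} [CommRing R]

theorem Monic.eq_zero_of_mul_eq_C {f q : R[X]} {a : R} (hf : f.Monic) (hdeg : 0 < f.natDegree)
    (h : q * f = C a) : q = 0 := by
  by_contra hq
  have := hf.natDegree_mul' hq
  rw [mul_comm, h, natDegree_C] at this
  omega

theorem eq_zero_of_mul_quadratic_eq_C {q : R[X]} {a b c : R}
    (h : q * (X ^ 2 + C b * X + C c) = C a) : q = 0 := by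
  nontriviality R
  have hdeg : (X ^ 2 + C b * X + C c).natDegree = 2 := by compute_degree!
  exact Monic.eq_zero_of_mul_eq_C (by monicity!) (by omega) h

theorem mem_map_C_iff_map_mk_eq_zero {I : Ideal R} {p : R[X]} :
    p ∈ Ideal.map C I ↔ p.map (Ideal.Quotient.mk I) = 0 := by
  rw [← coe_mapRingHom, ← RingHom.mem_ker, ker_mapRingHom, Ideal.mk_ker]

theorem span_C_mul_X_image (S : Set R) :
    Ideal.span ((fun s : R => C s * X) '' S) = Ideal.map C (Ideal.span S) * Ideal.span {X} := by
  rw [Ideal.map_span, Ideal.span_mul_span, Set.mul_singleton, Set.image_image]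

end Polynomial

theorem Ideal.span_image_mul_right {R : Type*} [CommRing R] (S : Set R) (c : R) :
    Ideal.span ((fun s : R => s * c) '' S) = Ideal.span S * Ideal.span {c} := by
  rw [Ideal.span_mul_span, Set.mul_singleton]

section

variable {R : Type*} [CommRing R] {b c : R} {S : Set R}

theorem mem_span_image_mul_right_of_C_mem {r : R}
    (h : C r ∈ Ideal.span ({X ^ 2 + C b * X + C c} ∪ (fun s : R => C s * X) '' S)) :
    r ∈ Ideal.span ((fun s : R => s * c) '' S) := by
  rw [Ideal.span_union, Submodule.mem_sup] at h
  obtain ⟨_, hqf, t, ht, hqt⟩ := h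
  obtain ⟨q, rfl⟩ := Ideal.mem_span_singleton'.1 hqf
  rw [span_C_mul_X_image] at ht
  obtain ⟨htK, htX⟩ := Ideal.mul_le_inf ht
  have hq : q.map (Ideal.Quotient.mk (Ideal.span S)) = 0 := by
    refine eq_zero_of_mul_quadratic_eq_C (a := Ideal.Quotient.mk _ r)
      (b := Ideal.Quotient.mk _ b) (c := Ideal.Quotient.mk _ c) ?_
    have := congrArg (map (Ideal.Quotient.mk (Ideal.span S))) hqt
    simpa [mem_map_C_iff_map_mk_eq_zero.1 htK] using this
  have hr : r = q.coeff 0 * c := by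
    have := congrArg (coeff · 0) hqt
    simpa [mul_coeff_zero, X_dvd_iff.1 (Ideal.mem_span_singleton.1 htX)] using this.symm
  rw [hr, Ideal.span_image_mul_right]
  exact Ideal.mul_mem_mul (Ideal.mem_map_C_iff.1 (mem_map_C_iff_map_mk_eq_zero.2 hq) 0)
    (Ideal.mem_span_singleton_self c)

theorem C_mul_mem_span_quadratic_union {s : R} (hs : s ∈ S) :
    C (s * c) ∈ Ideal.span ({X ^ 2 + C b * X + C c} ∪ (fun s : R => C s * X) '' S) := by
  rw [show C (s * c) = C s * (X ^ 2 + C b * X + C c) - C s * X * (X + C b) by rw [C_mul]; ring]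
  exact sub_mem (Ideal.mul_mem_left _ _ (Ideal.subset_span (.inl rfl)))
    (Ideal.mul_mem_right _ _ (Ideal.subset_span (.inr ⟨s, hs, rfl⟩)))

end

/-- Let `R` be a commutative ring, `b c : R`, `S ⊆ R`. Let `I` be the ideal of
`R[X]` generated by `X² + bX + c` together with all `s·X` for `s ∈ S`. Then the kernel of the
composite ring homomorphism `R → R[X] → R[X]/I` is exactly the ideal of `R` generated by
`{s·c : s ∈ S}`. -/
theorem kernel_const_to_quotient {R : Type*} [CommRing R] (b c : R) (S : Set R) :
    RingHom.ker
      ((Ideal.Quotient.mk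
          (Ideal.span ({X ^ 2 + C b * X + C c} ∪ (fun s : R => C s * X) '' S))).comp
        (C : R →+* R[X])) =
      Ideal.span ((fun s : R => s * c) '' S) := by
  apply le_antisymm
  · intro r hr
    rw [RingHom.mem_ker, RingHom.comp_apply, Ideal.Quotient.eq_zero_iff_mem] at hr
    exact mem_span_image_mul_right_of_C_mem hr
  · rw [Ideal.span_le]
    rintro _ ⟨s, hs, rfl⟩
    exact Ideal.Quotient.eq_zero_iff_mem.2 (C_mul_mem_span_quadratic_union hs)
end

section
/- Let R be a commutative ring, let b, c ∈ R, and let S be a subset of R. Let I be the ideal of R[X] generated by X² + bX + c together with all elements s·X for s ∈ S, and let x̄ denote the image of X in the quotient ring R[X]/I. Then for r ∈ R, the element r·x̄ is zero in R[X]/I if and only if r lies in the ideal of R generated by S; that is, the annihilator in R of x̄ (under the R-module structure of R[X]/I) equals the ideal of R generated by S. -/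
/-!
If `r ∈ span S` then `C r * X` is visibly in `I`. Conversely, reducing modulo `J = span S` kills
every generator `C s * X` and sends `I` into the principal ideal of the monic quadratic
`X² + b̄X + c̄` of `(R/J)[X]`; a multiple of a monic polynomial of degree 2 that has degree at
most 1 is zero, so `C r̄ * X = 0`, i.e. `r ∈ J`.
-/

open Polynomial

section

variable {R : Type*} [CommRing R]

theorem eq_zero_of_C_mul_X_mem_span_quadratic {a b c : R}
    (h : C a * X ∈ Ideal.span {X ^ 2 + C b * X + C c}) : a = 0 := by
  nontriviality R
  by_contra ha
  have hq : (X ^ 2 + C b * X + C c).Monic := by monicity!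
  have hdeg : (X ^ 2 + C b * X + C c).degree = 2 := by compute_degree!
  refine hq.not_dvd_of_degree_lt ?_ ?_ (Ideal.mem_span_singleton.mp h)
  · simpa [C_mul_X_eq_monomial] using ha
  · exact (degree_C_mul_X_le a).trans_lt (by rw [hdeg]; norm_num)

theorem C_mul_X_mem_span_image_of_mem_span {S : Set R} {r : R}
    (hr : r ∈ Ideal.span S) : C r * X ∈ Ideal.span ((fun s : R => C s * X) '' S) := by
  have hC : C r ∈ Ideal.span (C '' S) := by
    rw [← Ideal.map_span]; exact Ideal.mem_map_of_mem C hr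
  have := Ideal.mul_mem_mul hC (Ideal.mem_span_singleton_self X)
  rwa [Ideal.span_mul_span', Set.mul_singleton, Set.image_image] at this

theorem map_span_insert_C_mul_X_le {R' : Type*} [CommRing R'] (f : R →+* R')
    (q : R[X]) (S : Set R) (hS : ∀ s ∈ S, f s = 0) :
    (Ideal.span (insert q ((fun s : R => C s * X) '' S))).map (mapRingHom f) ≤
      Ideal.span {q.map f} := by
  rw [Ideal.map_span, Ideal.span_le, Set.image_insert_eq, Set.insert_subset_iff]
  refine ⟨Ideal.mem_span_singleton_self _, ?_⟩
  rintro _ ⟨_, ⟨s, hs, rfl⟩, rfl⟩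
  simp [hS s hs]

end

/-- Let `R` be a commutative ring, `b c : R`, `S ⊆ R`. Let `I` be the ideal of
`R[X]` generated by `X² + bX + c` together with all `s·X` for `s ∈ S`, and let `x̄` be the image
of `X` in `R[X]/I`. Then for `r : R`, `r • x̄ = 0` in `R[X]/I` if and only if `r` lies in the
ideal of `R` generated by `S`: the annihilator in `R` of `x̄` equals `Ideal.span S`. -/
theorem annihilator_of_class_of_X {R : Type*} [CommRing R] (b c : R) (S : Set R) (r : R) :
    r • (Ideal.Quotient.mk
          (Ideal.span ({X ^ 2 + C b * X + C c} ∪ (fun s : R => C s * X) '' S)) X) = 0 ↔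
      r ∈ Ideal.span S := by
  rw [← Ideal.Quotient.mkₐ_eq_mk R, ← map_smul, smul_eq_C_mul, Ideal.Quotient.mkₐ_eq_mk,
    Ideal.Quotient.eq_zero_iff_mem, Set.singleton_union]
  constructor
  · intro h
    rw [← Ideal.Quotient.eq_zero_iff_mem]
    have hS : ∀ s ∈ S, Ideal.Quotient.mk (Ideal.span S) s = 0 := fun s hs =>
      Ideal.Quotient.eq_zero_iff_mem.mpr (Ideal.subset_span hs)
    refine eq_zero_of_C_mul_X_mem_span_quadratic
      (b := Ideal.Quotient.mk (Ideal.span S) b) (c := Ideal.Quotient.mk (Ideal.span S) c) ?_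
    simpa using map_span_insert_C_mul_X_le _ _ S hS (Ideal.mem_map_of_mem _ h)
  · intro hr
    exact Ideal.span_mono (Set.subset_insert _ _) (C_mul_X_mem_span_image_of_mem_span hr)
end

section
/- Let R be a commutative ring, let b, c ∈ R, and let S be a subset of R. In the ring A = R[X]/(X² + bX + c), which is a free R-module with basis consisting of 1 and the image x of X, the ideal of A generated by the set {s·x : s ∈ S} equals, as an R-submodule of A, the R-submodule spanned by {s·x : s ∈ S} together with {s·c·1 : s ∈ S}. -/
open Polynomial

private lemma aux_span_sx {R A : Type*} [CommRing R] [CommRing A] [Algebra R A]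
    (b c : R) (x : A)
    (key : x * x + algebraMap R A b * x + algebraMap R A c = 0)
    (hgen : ∀ a : A, ∃ p : R[X], aeval x p = a) (S : Set R) :
    Submodule.restrictScalars R (Ideal.span ((fun s : R => s • x) '' S)) =
      Submodule.span R
        (((fun s : R => s • x) '' S) ∪ ((fun s : R => (s * c) • (1 : A)) '' S)) := by
  set G1 : Set A := (fun s : R => s • x) '' S with hG1
  set G2 : Set A := (fun s : R => (s * c) • (1 : A)) '' S with hG2
  set T : Submodule R A := Submodule.span R (G1 ∪ G2) with hT
  have hTx : ∀ z ∈ T, x * z ∈ T := by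
    intro z hz
    induction hz using Submodule.span_induction with
    | mem z hz =>
      rcases hz with hz | hz
      · obtain ⟨s, hs, rfl⟩ := hz
        have h1 : x * (s • x) = (-b) • (s • x) + (-1 : R) • ((s * c) • (1 : A)) := by
          simp only [Algebra.smul_def, map_mul, map_neg, map_one, mul_one]
          linear_combination (algebraMap R A s) * key
        rw [h1]
        exact T.add_mem (T.smul_mem _ (Submodule.subset_span (Or.inl ⟨s, hs, rfl⟩)))
          (T.smul_mem _ (Submodule.subset_span (Or.inr ⟨s, hs, rfl⟩)))
      · obtain ⟨s, hs, rfl⟩ := hz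
        have h1 : x * ((s * c) • (1 : A)) = c • (s • x) := by
          simp only [Algebra.smul_def, map_mul, mul_one]
          ring
        rw [h1]
        exact T.smul_mem _ (Submodule.subset_span (Or.inl ⟨s, hs, rfl⟩))
    | zero => simp only [mul_zero]; exact T.zero_mem
    | add u v _ _ hu hv => rw [mul_add]; exact T.add_mem hu hv
    | smul r u _ hu => rw [mul_smul_comm]; exact T.smul_mem _ hu
  have hTxn : ∀ (n : ℕ) (z : A), z ∈ T → x ^ n * z ∈ T := by
    intro n
    induction n with
    | zero => intro z hz; simpa using hz
    | succ n ih =>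
      intro z hz
      have h2 : x ^ (n + 1) * z = x * (x ^ n * z) := by ring
      rw [h2]
      exact hTx _ (ih z hz)
  have hTa : ∀ (a z : A), z ∈ T → a * z ∈ T := by
    intro a z hz
    obtain ⟨p, rfl⟩ := hgen a
    induction p using Polynomial.induction_on' with
    | add p q hp hq => rw [map_add, add_mul]; exact T.add_mem hp hq
    | monomial n r =>
      have h3 : aeval x (monomial n r) * z = r • (x ^ n * z) := by
        rw [aeval_monomial, Algebra.smul_def, mul_assoc]
      rw [h3]
      exact T.smul_mem _ (hTxn n z hz)
  apply le_antisymm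
  · intro y hy
    have hy' : y ∈ Ideal.span G1 := hy
    clear hy
    induction hy' using Submodule.span_induction with
    | mem z hz => exact Submodule.subset_span (Or.inl hz)
    | zero => exact T.zero_mem
    | add u v _ _ hu hv => exact T.add_mem hu hv
    | smul a u _ hu => exact hTa a u hu
  · rw [hT]
    apply Submodule.span_le.mpr
    rintro y (hy | hy)
    · exact Ideal.subset_span hy
    · obtain ⟨s, hs, rfl⟩ := hy
      have hgen' : s • x ∈ Ideal.span G1 := Ideal.subset_span ⟨s, hs, rfl⟩
      have heq : (s * c) • (1 : A) = -((x + algebraMap R A b) * (s • x)) := by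
        simp only [Algebra.smul_def, map_mul, mul_one]
        linear_combination (algebraMap R A s) * key
      show (s * c) • (1 : A) ∈ Ideal.span G1
      rw [heq]
      exact neg_mem (Ideal.mul_mem_left _ _ hgen')

/-- Let `R` be a commutative ring, `b c : R`, `S ⊆ R`. In the ring
`A = R[X]/(X² + bX + c)` (a free `R`-module with basis `1, x`, where `x` is the image of `X`),
the ideal of `A` generated by `{s • x : s ∈ S}` equals, as an `R`-submodule of `A`, the
`R`-submodule spanned by `{s • x : s ∈ S} ∪ {(s·c) • 1 : s ∈ S}`. -/
theorem ideal_span_sx_as_submodule {R : Type*} [CommRing R] (b c : R) (S : Set R) :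
    Submodule.restrictScalars R
        (Ideal.span
          ((fun s : R =>
              s • (Ideal.Quotient.mk (Ideal.span {X ^ 2 + C b * X + C c}) X)) '' S)) =
      Submodule.span R
        (((fun s : R =>
              s • (Ideal.Quotient.mk (Ideal.span {X ^ 2 + C b * X + C c}) X)) '' S) ∪
          ((fun s : R =>
              (s * c) •
                (1 : R[X] ⧸ Ideal.span ({X ^ 2 + C b * X + C c} : Set R[X]))) '' S)) := by
  have key : (Ideal.Quotient.mk (Ideal.span {X ^ 2 + C b * X + C c}) X) *
        (Ideal.Quotient.mk (Ideal.span {X ^ 2 + C b * X + C c}) X) +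
      algebraMap R _ b * (Ideal.Quotient.mk (Ideal.span {X ^ 2 + C b * X + C c}) X) +
      algebraMap R _ c = 0 := by
    have h0 : Ideal.Quotient.mk (Ideal.span {X ^ 2 + C b * X + C c})
        (X ^ 2 + C b * X + C c) = 0 :=
      Ideal.Quotient.eq_zero_iff_mem.mpr (Ideal.subset_span rfl)
    have hab : ∀ r : R, algebraMap R (R[X] ⧸ Ideal.span {X ^ 2 + C b * X + C c}) r =
        Ideal.Quotient.mk (Ideal.span {X ^ 2 + C b * X + C c}) (C r) := fun r => rfl
    rw [hab, hab, ← map_mul, ← map_mul, ← map_add, ← map_add, ← h0]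
    ring_nf
  have hgen : ∀ a : R[X] ⧸ Ideal.span ({X ^ 2 + C b * X + C c} : Set R[X]),
      ∃ p : R[X], aeval (Ideal.Quotient.mk (Ideal.span {X ^ 2 + C b * X + C c}) X) p = a := by
    intro a
    obtain ⟨p, rfl⟩ := Ideal.Quotient.mk_surjective a
    refine ⟨p, ?_⟩
    have : aeval (Ideal.Quotient.mkₐ R (Ideal.span {X ^ 2 + C b * X + C c}) X) p =
        Ideal.Quotient.mkₐ R (Ideal.span {X ^ 2 + C b * X + C c}) (aeval X p) :=
      aeval_algHom_apply _ X p
    simpa [Ideal.Quotient.mkₐ_eq_mk] using this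
  exact aux_span_sx b c _ key hgen S
end

section
/- Let R be a commutative ring, let b, c ∈ R, and let S be a subset of R. Let I be the ideal of R[X] generated by X² + bX + c together with all elements s·X for s ∈ S. Then the R-linear map R × R → R[X]/I sending (u, v) to the class of the polynomial u + v·X is surjective, and its kernel is J₁ × J₂, where J₁ is the ideal of R generated by {s·c : s ∈ S} and J₂ is the ideal of R generated by S. Consequently R[X]/I is isomorphic as an R-module to (R/J₁) × (R/J₂). -/
/-!
Division by the monic quadratic `f = X² + bX + c` reduces every polynomial to a remainder
`u + vX` congruent to it modulo `I`, which gives surjectivity. For the kernel, every `p ∈ I` has a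
remainder whose constant coefficient lies in `J₁` and whose coefficients all lie in `J₂`; it suffices
to check this on multiples `a·g` of the generators. For `g = f` the remainder is `0`; for
`g = sX` it is `s` times the remainder of `aX`, whose constant coefficient is `-c` times that of the
quotient because `aX` has no constant term. Conversely `s·c = s·f - (f div X)·sX` and `sX` lie in `I`.
-/

open Polynomial

/-- The `R`-linear map `R × R → R[X]/I` sending `(u, v)` to the class of `u + v·X`. -/
noncomputable def constLinearPair {R : Type*} [CommRing R] (I : Ideal R[X]) :
    R × R →ₗ[R] R[X] ⧸ I :=
  (Ideal.Quotient.mkₐ R I).toLinearMap.comp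
    ((Algebra.linearMap R R[X]).coprod (LinearMap.toSpanSingleton R R[X] X))

section

variable {R : Type*} [CommRing R]

namespace Polynomial

theorem coeff_zero_modByMonic_mul_X (f p : R[X]) :
    ((p * X) %ₘ f).coeff 0 = -(f.coeff 0 * ((p * X) /ₘ f).coeff 0) := by
  have h := congrArg (coeff · 0) (modByMonic_add_div (p * X) f)
  simp only [coeff_add, mul_coeff_zero, coeff_X_zero, mul_zero] at h
  linear_combination h

theorem coeff_modByMonic_mem_of_mem_span {f : R[X]} (hf : f.Monic) {S : Set R} {p : R[X]}
    (hp : p ∈ Ideal.span ({f} ∪ (fun s : R => C s * X) '' S)) :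
    (p %ₘ f).coeff 0 ∈ Ideal.span ((fun s : R => s * f.coeff 0) '' S) ∧
      ∀ n, (p %ₘ f).coeff n ∈ Ideal.span S := by
  suffices h : ∀ a : R[X],
      ((a * p) %ₘ f).coeff 0 ∈ Ideal.span ((fun s : R => s * f.coeff 0) '' S) ∧
        ∀ n, ((a * p) %ₘ f).coeff n ∈ Ideal.span S by
    simpa using h 1
  induction hp using Submodule.span_induction with
  | mem g hg =>
    intro a
    rcases hg with rfl | ⟨s, hs, rfl⟩
    · simp [mul_self_modByMonic hf]
    · rw [show a * (C s * X) = s • (a * X) by rw [smul_eq_C_mul]; ring, smul_modByMonic]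
      refine ⟨?_, fun n => ?_⟩
      · rw [coeff_smul, smul_eq_mul, coeff_zero_modByMonic_mul_X,
          show ∀ d, s * -(f.coeff 0 * d) = -(d * (s * f.coeff 0)) from fun d => by ring]
        exact neg_mem (Ideal.mul_mem_left _ _ (Ideal.subset_span ⟨s, hs, rfl⟩))
      · rw [coeff_smul, smul_eq_mul]
        exact Ideal.mul_mem_right _ _ (Ideal.subset_span hs)
  | zero => simp
  | add g h _ _ hg hh =>
    intro a
    rw [mul_add, add_modByMonic]
    exact ⟨by simpa using add_mem (hg a).1 (hh a).1,
      fun n => by simpa using add_mem ((hg a).2 n) ((hh a).2 n)⟩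
  | smul r g _ hg =>
    intro a
    simpa [mul_assoc] using hg (a * r)

theorem C_mem_span_of_mem_span_mul_coeff_zero {f : R[X]} {S : Set R} {u : R}
    (hu : u ∈ Ideal.span ((fun s : R => s * f.coeff 0) '' S)) :
    C u ∈ Ideal.span ({f} ∪ (fun s : R => C s * X) '' S) := by
  rw [← Ideal.mem_comap]
  refine Ideal.span_le.2 ?_ hu
  rintro _ ⟨s, hs, rfl⟩
  have h : C (s * f.coeff 0) = C s * f - divX f * (C s * X) := by
    rw [C_mul]
    linear_combination C s * X_mul_divX_add f
  rw [SetLike.mem_coe, Ideal.mem_comap, h]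
  exact sub_mem (Ideal.mul_mem_left _ _ (Ideal.subset_span (Or.inl rfl)))
    (Ideal.mul_mem_left _ _ (Ideal.subset_span (Or.inr ⟨s, hs, rfl⟩)))

theorem C_mul_X_mem_span_of_mem_span {f : R[X]} {S : Set R} {v : R} (hv : v ∈ Ideal.span S) :
    C v * X ∈ Ideal.span ({f} ∪ (fun s : R => C s * X) '' S) := by
  rw [← smul_eq_mul, ← Submodule.mem_colon_singleton, ← Ideal.mem_comap]
  refine Ideal.span_le.2 (fun s hs => ?_) hv
  rw [SetLike.mem_coe, Ideal.mem_comap, Submodule.mem_colon_singleton, smul_eq_mul]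
  exact Ideal.subset_span (Or.inr ⟨s, hs, rfl⟩)

section Quadratic

variable (b c : R)

theorem monic_quadratic : (X ^ 2 + C b * X + C c).Monic := by
  rw [add_assoc]
  exact monic_X_pow_add (degree_linear_le.trans_lt (by exact_mod_cast Nat.one_lt_two))

theorem degree_quadratic_eq_two [Nontrivial R] : degree (X ^ 2 + C b * X + C c) = 2 := by
  rw [degree_eq_natDegree (monic_quadratic b c).ne_zero,
    (isMonicOfDegree_add_add_two b c).natDegree_eq, Nat.cast_ofNat]

theorem degree_modByMonic_quadratic_le_one (p : R[X]) :
    degree (p %ₘ (X ^ 2 + C b * X + C c)) ≤ 1 := by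
  nontriviality R
  have h := degree_modByMonic_lt p (monic_quadratic b c)
  rw [degree_quadratic_eq_two] at h
  exact Order.le_of_lt_succ h

theorem modByMonic_quadratic_eq_self {p : R[X]} (hp : degree p ≤ 1) :
    p %ₘ (X ^ 2 + C b * X + C c) = p := by
  nontriviality R
  rw [modByMonic_eq_self_iff (monic_quadratic b c), degree_quadratic_eq_two]
  exact hp.trans_lt (by exact_mod_cast Nat.one_lt_two)

theorem C_add_C_mul_X_mem_span_quadratic_iff {S : Set R} {u v : R} :
    C u + C v * X ∈ Ideal.span ({X ^ 2 + C b * X + C c} ∪ (fun s : R => C s * X) '' S) ↔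
      u ∈ Ideal.span ((fun s : R => s * c) '' S) ∧ v ∈ Ideal.span S := by
  have hc : (X ^ 2 + C b * X + C c).coeff 0 = c := by simp
  constructor
  · intro h
    have hred : (C u + C v * X) %ₘ (X ^ 2 + C b * X + C c) = C u + C v * X :=
      modByMonic_quadratic_eq_self b c (add_comm (C u) _ ▸ degree_linear_le)
    have h := coeff_modByMonic_mem_of_mem_span (monic_quadratic b c) h
    rw [hred, hc] at h
    simpa using And.intro h.1 (h.2 1)
  · rintro ⟨hu, hv⟩
    refine add_mem (C_mem_span_of_mem_span_mul_coeff_zero ?_) (C_mul_X_mem_span_of_mem_span hv)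
    rwa [hc]

end Quadratic

end Polynomial

theorem constLinearPair_apply (I : Ideal R[X]) (u v : R) :
    constLinearPair I (u, v) = Ideal.Quotient.mk I (C u + C v * X) := by
  simp [constLinearPair, smul_eq_C_mul, algebraMap_eq]

theorem constLinearPair_surjective (b c : R) {I : Ideal R[X]} (hI : X ^ 2 + C b * X + C c ∈ I) :
    Function.Surjective (constLinearPair I) := by
  intro z
  obtain ⟨p, rfl⟩ := Ideal.Quotient.mk_surjective z
  set r := p %ₘ (X ^ 2 + C b * X + C c)
  refine ⟨(r.coeff 0, r.coeff 1), ?_⟩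
  rw [constLinearPair_apply, Ideal.Quotient.mk_eq_mk_iff_sub_mem, add_comm,
    ← eq_X_add_C_of_degree_le_one (degree_modByMonic_quadratic_le_one b c p)]
  exact Ideal.mem_of_dvd _ (dvd_modByMonic_sub p _) hI

end

noncomputable def LinearMap.prodQuotientEquivOfKerEq {R M M' N : Type*} [Ring R]
    [AddCommGroup M] [AddCommGroup M'] [AddCommGroup N] [Module R M] [Module R M'] [Module R N]
    {p : Submodule R M} {q : Submodule R M'} (φ : M × M' →ₗ[R] N)
    (hφ : Function.Surjective φ) (hker : LinearMap.ker φ = p.prod q) :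
    ((M ⧸ p) × (M' ⧸ q)) ≃ₗ[R] N :=
  ((p.mkQ.prodMap q.mkQ).quotKerEquivOfSurjective
      (Prod.map_surjective.2 ⟨p.mkQ_surjective, q.mkQ_surjective⟩)).symm ≪≫ₗ
    Submodule.quotEquivOfEq _ _ (by rw [LinearMap.ker_prodMap, p.ker_mkQ, q.ker_mkQ, hker]) ≪≫ₗ
    φ.quotKerEquivOfSurjective hφ

/-- Let `R` be a commutative ring, `b c : R`, `S ⊆ R`. Let `I` be the ideal of
`R[X]` generated by `X² + bX + c` together with all `s·X` for `s ∈ S`. Then the `R`-linear map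
`R × R → R[X]/I`, `(u, v) ↦ [u + v·X]`, is surjective, its kernel is `J₁ × J₂` where
`J₁ = (s·c : s ∈ S)` and `J₂ = (S)` are ideals of `R`, and consequently `R[X]/I ≅ (R/J₁) × (R/J₂)`
as `R`-modules. -/
theorem quotient_module_structure {R : Type*} [CommRing R] (b c : R) (S : Set R)
    (I : Ideal R[X]) (hI : I = Ideal.span ({X ^ 2 + C b * X + C c} ∪ (fun s : R => C s * X) '' S))
    (J₁ : Ideal R) (hJ₁ : J₁ = Ideal.span ((fun s : R => s * c) '' S))
    (J₂ : Ideal R) (hJ₂ : J₂ = Ideal.span S) :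
    (∀ u v : R, constLinearPair I (u, v) = Ideal.Quotient.mk I (C u + C v * X)) ∧
      Function.Surjective (constLinearPair I) ∧
      LinearMap.ker (constLinearPair I) = Submodule.prod J₁ J₂ ∧
      Nonempty (((R ⧸ J₁) × (R ⧸ J₂)) ≃ₗ[R] (R[X] ⧸ I)) := by
  have hsurj : Function.Surjective (constLinearPair I) :=
    constLinearPair_surjective b c (hI ▸ Ideal.subset_span (Set.mem_union_left _ rfl))
  have hker : LinearMap.ker (constLinearPair I) = Submodule.prod J₁ J₂ := by
    ext ⟨u, v⟩
    rw [LinearMap.mem_ker, constLinearPair_apply, Ideal.Quotient.eq_zero_iff_mem, hI,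
      Submodule.mem_prod, hJ₁, hJ₂]
    exact C_add_C_mul_X_mem_span_quadratic_iff b c
  exact ⟨constLinearPair_apply I, hsurj, hker,
    ⟨(constLinearPair I).prodQuotientEquivOfKerEq hsurj hker⟩⟩
end
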